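/- Let G and H be simple graphs on n ≥ 8 vertices and let k be a natural number with 4k ≤ n. If G and H share at least n − k common cards, then their average degrees differ by less than 1; equivalently, 2·|e(G) − e(H)| < n. -/
import Mathlib

open SimpleGraph

/-- The degree of a vertex, as the cardinality of its neighbour set. -/
noncomputable def gdeg {V : Type} (G : SimpleGraph V) (v : V) : ℕ :=
  (G.neighborSet v).ncard

/-- The number of edges of a graph. -/
noncomputable def ecount {V : Type} (G : SimpleGraph V) : ℕ :=
  G.edgeSet.ncard

/-- The card `G - v`: the induced subgraph on the complement of `v`. -/
def gcard {V : Type} (G : SimpleGraph V) (v : V) : SimpleGraph {w : V // w ≠ v} :=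
  G.induce {w : V | w ≠ v}

/-- The number of vertices of degree exactly `t`. -/
noncomputable def dcount {V : Type} (G : SimpleGraph V) (t : ℕ) : ℕ :=
  {v : V | gdeg G v = t}.ncard

/-- `G` and `H` share at least `m` common cards: there are `m` vertices of `G`,
injectively matched with vertices of `H`, whose cards are pairwise isomorphic. -/
def SharesCards {n : ℕ} (G H : SimpleGraph (Fin n)) (m : ℕ) : Prop :=
  ∃ (S : Finset (Fin n)) (f : Fin n → Fin n),
    m ≤ S.card ∧ Set.InjOn f ↑S ∧
    ∀ v ∈ S, Nonempty (gcard G v ≃g gcard H (f v))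

lemma ecount_iso {V W : Type} {G : SimpleGraph V} {H : SimpleGraph W}
    (φ : G ≃g H) : ecount G = ecount H := by
  simp only [ecount, ← Nat.card_coe_set_eq]
  exact Nat.card_congr φ.mapEdgeSet

lemma gdeg_eq_degree {n : ℕ} (G : SimpleGraph (Fin n)) [DecidableRel G.Adj] (v : Fin n) :
    gdeg G v = G.degree v := by
  rw [gdeg, ← SimpleGraph.card_neighborFinset_eq_degree, SimpleGraph.neighborFinset_def,
    Set.ncard_eq_toFinset_card']

lemma gdeg_le {n : ℕ} (G : SimpleGraph (Fin n)) (v : Fin n) :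
    gdeg G v ≤ n - 1 := by
  classical
  have := G.degree_lt_card_verts v
  rw [Fintype.card_fin] at this
  rw [gdeg_eq_degree]
  omega

lemma sum_gdeg {n : ℕ} (G : SimpleGraph (Fin n)) [DecidableRel G.Adj] :
    ∑ v, gdeg G v = 2 * ecount G := by
  simp only [gdeg_eq_degree]
  rw [G.sum_degrees_eq_twice_card_edges, ecount, SimpleGraph.edgeFinset,
    Set.ncard_eq_toFinset_card']

lemma ecount_gcard {n : ℕ} (G : SimpleGraph (Fin n)) (v : Fin n) :
    ecount (gcard G v) + gdeg G v = ecount G := by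
  classical
  have hinj : Function.Injective (Sym2.map (Subtype.val : {w : Fin n // w ≠ v} → Fin n)) :=
    Sym2.map.injective Subtype.val_injective
  have himg : Sym2.map Subtype.val '' (gcard G v).edgeSet
      = G.edgeSet \ G.incidenceSet v := by
    ext e
    constructor
    · rintro ⟨e', he', rfl⟩
      induction e' using Sym2.ind with
      | _ a b =>
        simp only [gcard, SimpleGraph.mem_edgeSet, SimpleGraph.comap_adj, Function.Embedding.coe_subtype] at he'
        constructor
        · simpa using he'
        · intro hinc
          have hv : v ∈ Sym2.map Subtype.val s(a, b) := hinc.2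
          simp only [Sym2.map_pair_eq, Sym2.mem_iff] at hv
          rcases hv with h | h
          · exact a.2 h.symm
          · exact b.2 h.symm
    · rintro ⟨he, hni⟩
      induction e using Sym2.ind with
      | _ a b =>
        have ha : a ≠ v := by
          intro h; exact hni ⟨he, by simp [h]⟩
        have hb : b ≠ v := by
          intro h; exact hni ⟨he, by simp [h]⟩
        refine ⟨s(⟨a, ha⟩, ⟨b, hb⟩), ?_, by simp⟩
        simp only [gcard, SimpleGraph.mem_edgeSet, SimpleGraph.comap_adj, Function.Embedding.coe_subtype]
        simpa using he
  have h1 : ecount (gcard G v) = (G.edgeSet \ G.incidenceSet v).ncard := by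
    rw [ecount, ← himg, Set.ncard_image_of_injective _ hinj]
  have h2 : gdeg G v = (G.incidenceSet v).ncard := by
    rw [gdeg, ← Nat.card_coe_set_eq, ← Nat.card_coe_set_eq]
    exact (Nat.card_congr (G.incidenceSetEquivNeighborSet v)).symm
  rw [h1, h2, ecount]
  exact Set.ncard_diff_add_ncard_of_subset (G.incidenceSet_subset v) (Set.toFinite _)

/-- If two graphs on `n ≥ 8` vertices share at least `n - k` common cards with
`4k ≤ n`, then their average degrees differ by less than 1, i.e.
`2 |e(G) - e(H)| < n`. -/
theorem average_degree_recognition {n k : ℕ} (hn : 8 ≤ n) (hk : 4 * k ≤ n)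
    (G H : SimpleGraph (Fin n))
    (hshare : SharesCards G H (n - k)) :
    2 * |(ecount G : ℤ) - (ecount H : ℤ)| < (n : ℤ) := by
  classical
  obtain ⟨S, f, hScard, hfin, hiso⟩ := hshare
  set s : ℕ := S.card with hs
  set T : Finset (Fin n) := S.image f with hT
  have hTcard : T.card = s := Finset.card_image_of_injOn hfin
  have hsn : s ≤ n := by
    simpa using Finset.card_le_card (Finset.subset_univ S)
  -- per-card equation
  have key : ∀ v ∈ S, (ecount G : ℤ) - gdeg G v = (ecount H : ℤ) - gdeg H (f v) := by
    intro v hv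
    obtain ⟨φ⟩ := hiso v hv
    have h1 := ecount_gcard G v
    have h2 := ecount_gcard H (f v)
    have h3 := ecount_iso φ
    push_cast [← h1, ← h2, h3]
    ring
  -- sum over S
  have hsum : (s : ℤ) * ((ecount G : ℤ) - ecount H)
      = (∑ v ∈ S, (gdeg G v : ℤ)) - ∑ w ∈ T, (gdeg H w : ℤ) := by
    have := Finset.sum_congr rfl key
    rw [Finset.sum_sub_distrib, Finset.sum_sub_distrib] at this
    simp only [Finset.sum_const, nsmul_eq_mul] at this
    have himg : ∑ w ∈ T, (gdeg H w : ℤ) = ∑ v ∈ S, (gdeg H (f v) : ℤ) := by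
      rw [hT]; exact Finset.sum_image (fun x hx y hy h => hfin hx hy h)
    rw [← himg] at this
    linarith
  -- bounds on partial degree sums
  have bound : ∀ (K : SimpleGraph (Fin n)) (U : Finset (Fin n)), U.card = s →
      2 * (ecount K : ℤ) - (n - s) * (n - 1) ≤ ∑ v ∈ U, (gdeg K v : ℤ) ∧
      (∑ v ∈ U, (gdeg K v : ℤ)) ≤ 2 * ecount K := by
    intro K U hU
    have htot : ∑ v, (gdeg K v : ℤ) = 2 * ecount K := by
      rw [← Nat.cast_sum, sum_gdeg]; push_cast; ring
    have hsplit : ∑ v, (gdeg K v : ℤ)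
        = (∑ v ∈ U, (gdeg K v : ℤ)) + ∑ v ∈ Finset.univ \ U, (gdeg K v : ℤ) := by
      rw [add_comm, Finset.sum_sdiff (Finset.subset_univ U)]
    have hcompl_card : (Finset.univ \ U).card = n - s := by
      rw [Finset.card_sdiff_of_subset (Finset.subset_univ U), hU, Finset.card_univ, Fintype.card_fin]
    have hub : ∑ v ∈ Finset.univ \ U, (gdeg K v : ℤ) ≤ (n - s) * (n - 1) := by
      calc ∑ v ∈ Finset.univ \ U, (gdeg K v : ℤ)
          ≤ ∑ _v ∈ Finset.univ \ U, ((n : ℤ) - 1) := by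
            apply Finset.sum_le_sum
            intro i _
            have := gdeg_le K i
            have : (gdeg K i : ℤ) ≤ (n : ℤ) - 1 := by
              have h8 : (1 : ℕ) ≤ n := by omega
              push_cast [Nat.cast_sub h8] at *
              omega
            exact this
        _ = ((n : ℤ) - s) * (n - 1) := by
            rw [Finset.sum_const, hcompl_card, nsmul_eq_mul]
            push_cast [Nat.cast_sub hsn]
            ring
    have hlb : 0 ≤ ∑ v ∈ Finset.univ \ U, (gdeg K v : ℤ) :=
      Finset.sum_nonneg fun i _ => by positivity
    constructor <;> linarith
  obtain ⟨hGl, hGu⟩ := bound G S rfl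
  obtain ⟨hHl, hHu⟩ := bound H T hTcard
  set D : ℤ := (ecount G : ℤ) - ecount H with hD
  have h1 : ((s : ℤ) - 2) * D ≤ ((n : ℤ) - s) * (n - 1) := by nlinarith [hGu, hHl, hsum]
  have h2 : -(((n : ℤ) - s) * (n - 1)) ≤ ((s : ℤ) - 2) * D := by nlinarith [hGl, hHu, hsum]
  have habs : ((s : ℤ) - 2) * |D| ≤ ((n : ℤ) - s) * (n - 1) := by
    rcases abs_cases D with ⟨h, _⟩ | ⟨h, _⟩
    · rw [h]; exact h1
    · rw [h]; linarith
  -- numeric conclusion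
  have hsk : (n : ℤ) - k ≤ s := by
    have : n - k ≤ s := hScard
    have := Nat.cast_le (α := ℤ).mpr this
    push_cast [Nat.cast_sub (by omega : k ≤ n)] at this
    linarith
  have hkn : 4 * (k : ℤ) ≤ n := by exact_mod_cast hk
  have hn' : (8 : ℤ) ≤ n := by exact_mod_cast hn
  have hsZ : (s : ℤ) ≤ n := by exact_mod_cast hsn
  by_contra hcon
  push_neg at hcon
  have habsD : 0 ≤ |D| := abs_nonneg D
  -- (s-2)*n ≤ (s-2)*2|D| ≤ 2(n-s)(n-1) ≤ 2k(n-1)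
  nlinarith [habs, hcon, hsk, hkn, hn', hsZ, habsD,
    mul_le_mul_of_nonneg_left hcon (by linarith : (0:ℤ) ≤ (s:ℤ) - 2)]
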